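/- For every real number a there exists δ > 0 such that the function x ↦ ( −(1/2)·( x/r_a(x) − r_a(x)/x )·(1+x)·e^{x} − (r_a(x)/2)·e^{3x} + x log x ) / x is bounded on (0,δ). (In the paper's notation: the transformed conformal-geodesic initial datum satisfies f_τ|_{scri⁻} = −r̃ log r̃ + O(r̃) as r̃ → 0⁺.) -/

import Mathlib

open Real Filter

noncomputable section

/-- `Eineg x = Ei(−x) = −∫_x^∞ e^{−t}/t dt`, the exponential integral. -/
def Eineg (x : ℝ) : ℝ := -∫ t in Set.Ioi x, Real.exp (-t) / t

/-- `u_a(x) = e^{−x}/x + a + Ei(−x)` for `x > 0`. -/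
def u (a x : ℝ) : ℝ := Real.exp (-x) / x + a + Eineg x

/-- `r_a(x) = 1/u_a(x)` (meaningful on intervals where `u_a > 0`). -/
def rga (a x : ℝ) : ℝ := (u a x)⁻¹

/-
Near `0`, `Ei(−x) = log x + O(1)`, so `c := u_a − 1/x − log x` stays bounded and
`v := x·u_a = 1 + x·c + x log x → 1`. Since `r_a = x / v`, the expression equals
`(c·A + B) / (2v)` where `A = x log x − (v+1)(1+x)eˣ` and
`B = −e^{3x} + x log² x − (v+1)((1+x)eˣ − 1) log x` both converge: the logarithmic
divergence cancels exactly, leaving only the terms `x log² x` and `O(x) · log x`, which tend to `0`.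
-/

open Set MeasureTheory Asymptotics Topology

/-- The datum `f_τ` on past null infinity, as a function of `x = r̃`. -/
def fTau (a x : ℝ) : ℝ :=
  -(1/2) * (x / rga a x - rga a x / x) * (1 + x) * rexp x - (rga a x / 2) * rexp (3*x)

lemma Filter.BoundedAtFilter.exists_abs_le_on_Ioo {f : ℝ → ℝ} {a : ℝ}
    (h : BoundedAtFilter (𝓝[>] a) f) : ∃ b > a, ∃ C : ℝ, ∀ x ∈ Ioo a b, |f x| ≤ C := by
  obtain ⟨C, hC⟩ := h.bound
  obtain ⟨b, hab, hsub⟩ := mem_nhdsGT_iff_exists_Ioo_subset.1 hC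
  exact ⟨b, hab, C, fun x hx => by simpa using hsub hx⟩

lemma tendsto_mul_log_nhdsGT_zero : Tendsto (fun x => x * log x) (𝓝[>] 0) (𝓝 0) := by
  simpa using (continuous_mul_log.tendsto 0).mono_left nhdsWithin_le_nhds

lemma tendsto_mul_log_sq_nhdsGT_zero : Tendsto (fun x => x * log x ^ 2) (𝓝[>] 0) (𝓝 0) := by
  have h := (tendsto_log_mul_rpow_nhdsGT_zero (r := 1/2) (by norm_num)).pow 2
  rw [zero_pow two_ne_zero] at h
  refine h.congr' (eventually_mem_nhdsWithin.mono fun x (hx : 0 < x) => ?_)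
  rw [mul_pow, ← sqrt_eq_rpow, sq_sqrt hx.le]
  ring

lemma tendsto_mul_log_nhdsGT_zero_of_isBigO {f : ℝ → ℝ} (hf : f =O[𝓝[>] 0] fun x => x) :
    Tendsto (fun x => f x * log x) (𝓝[>] 0) (𝓝 0) :=
  (hf.mul (isBigO_refl log _)).trans_tendsto tendsto_mul_log_nhdsGT_zero

lemma abs_exp_neg_sub_one_div_le_one {t : ℝ} (ht : 0 < t) : |(rexp (-t) - 1) / t| ≤ 1 := by
  rw [abs_div, abs_of_pos ht, div_le_one ht, abs_le]
  constructor
  · linarith [add_one_le_exp (-t)]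
  · linarith [exp_le_one_iff.2 (neg_nonpos.2 ht.le)]

lemma integrableOn_exp_neg_div_Ioi {x : ℝ} (hx : 0 < x) :
    IntegrableOn (fun t => rexp (-t) / t) (Ioi x) := by
  have hm : AEStronglyMeasurable (fun t => rexp (-t) / t) (volume.restrict (Ioi x)) :=
    ((continuous_exp.comp continuous_neg).continuousOn.div continuousOn_id
      fun t ht => (hx.trans ht).ne').aestronglyMeasurable measurableSet_Ioi
  refine ((exp_neg_integrableOn_Ioi x one_pos).mul_const x⁻¹).mono' hm ?_
  filter_upwards [ae_restrict_mem measurableSet_Ioi] with t (ht : x < t)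
  rw [norm_div, norm_of_nonneg (exp_pos _).le, norm_of_nonneg (hx.trans ht).le, neg_one_mul,
    div_eq_mul_inv]
  gcongr

lemma Eineg_sub_log_eq {x : ℝ} (hx : 0 < x) :
    Eineg x - log x = Eineg 1 - ∫ t in x..1, (rexp (-t) - 1) / t := by
  have hpos : ∀ t ∈ uIcc x 1, t ≠ 0 := fun t ht => (lt_of_lt_of_le (lt_min hx one_pos) ht.1).ne'
  have hexp : IntervalIntegrable (fun t => rexp (-t) / t) volume x 1 :=
    ((continuous_exp.comp continuous_neg).continuousOn.div continuousOn_id hpos).intervalIntegrable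
  have hinv : IntervalIntegrable (fun t => t⁻¹) volume x 1 :=
    (continuousOn_inv₀.mono fun t ht => hpos t ht).intervalIntegrable
  have hEi : Eineg 1 - Eineg x = ∫ t in x..1, rexp (-t) / t := by
    rw [Eineg, Eineg, neg_sub_neg, intervalIntegral.integral_Ioi_sub_Ioi'
      (integrableOn_exp_neg_div_Ioi hx) (integrableOn_exp_neg_div_Ioi one_pos)]
  have hlog : ∫ t in x..1, t⁻¹ = -log x := by
    rw [integral_inv_of_pos hx one_pos, one_div, log_inv]
  simp_rw [sub_div, one_div]
  rw [intervalIntegral.integral_sub hexp hinv, hlog, ← hEi]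
  ring

lemma abs_Eineg_sub_log_le {x : ℝ} (hx : 0 < x) (hx1 : x ≤ 1) :
    |Eineg x - log x| ≤ |Eineg 1| + 1 := by
  have hI : |∫ t in x..1, (rexp (-t) - 1) / t| ≤ 1 :=
    calc ‖∫ t in x..1, (rexp (-t) - 1) / t‖ ≤ 1 * |1 - x| :=
          intervalIntegral.norm_integral_le_of_norm_le_const fun t ht =>
            abs_exp_neg_sub_one_div_le_one (hx.trans (uIoc_of_le hx1 ▸ ht).1)
      _ ≤ 1 := by rw [abs_of_nonneg (by linarith)]; linarith
  rw [Eineg_sub_log_eq hx]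
  exact (abs_sub _ _).trans (by linarith)

lemma boundedAtFilter_Eineg_sub_log :
    BoundedAtFilter (𝓝[>] 0) (fun x => Eineg x - log x) := by
  refine IsBigO.of_bound (|Eineg 1| + 1) (eventually_of_mem (Ioc_mem_nhdsGT one_pos) fun x hx => ?_)
  simpa only [Pi.one_apply, norm_one, mul_one, norm_eq_abs] using abs_Eineg_sub_log_le hx.1 hx.2

section

variable (a : ℝ)

lemma boundedAtFilter_u_sub_inv_sub_log :
    BoundedAtFilter (𝓝[>] 0) (fun x => u a x - x⁻¹ - log x) := by
  have hexp : BoundedAtFilter (𝓝[>] 0) (fun x => (rexp (-x) - 1) / x) := by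
    refine IsBigO.of_bound 1 (eventually_mem_nhdsWithin.mono fun x hx => ?_)
    simpa only [Pi.one_apply, norm_one, mul_one, norm_eq_abs] using
      abs_exp_neg_sub_one_div_le_one hx
  refine ((hexp.add (const_boundedAtFilter _ a)).add boundedAtFilter_Eineg_sub_log).congr_left
    fun x => ?_
  simp only [u, Pi.add_apply, Function.const_apply, sub_div, one_div]
  ring

lemma tendsto_mul_u : Tendsto (fun x => x * u a x) (𝓝[>] 0) (𝓝 1) := by
  have hid : ZeroAtFilter (𝓝[>] (0:ℝ)) id := tendsto_id.mono_left nhdsWithin_le_nhds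
  have h := (tendsto_const_nhds (x := (1:ℝ))).add
    ((hid.mul_boundedAtFilter (boundedAtFilter_u_sub_inv_sub_log a)).add
      tendsto_mul_log_nhdsGT_zero)
  simp only [add_zero] at h
  refine h.congr' (eventually_mem_nhdsWithin.mono fun x (hx : 0 < x) => ?_)
  simp only [Pi.add_apply, Pi.mul_apply, id]
  field_simp
  ring

lemma boundedAtFilter_fTau_add_mul_log_div :
    BoundedAtFilter (𝓝[>] 0) (fun x => (fTau a x + x * log x) / x) := by
  have hv := tendsto_mul_u a
  have hp : Tendsto (fun x => (1 + x) * rexp x) (𝓝[>] 0) (𝓝 ((1 + 0) * rexp 0)) :=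
    (Continuous.tendsto (by fun_prop) 0).mono_left nhdsWithin_le_nhds
  have hpO : (fun x => (1 + x) * rexp x - 1) =O[𝓝[>] 0] fun x => x := by
    have hderiv := ((hasDerivAt_id' (0:ℝ)).const_add 1).mul (hasDerivAt_exp 0)
    simpa using hderiv.isBigO_sub.mono nhdsWithin_le_nhds
  have hA : Tendsto (fun x => x * log x - (x * u a x + 1) * ((1 + x) * rexp x)) (𝓝[>] 0) _ :=
    tendsto_mul_log_nhdsGT_zero.sub ((hv.add_const 1).mul hp)
  have hB : Tendsto (fun x => -rexp (3 * x) + x * log x ^ 2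
      - (x * u a x + 1) * (((1 + x) * rexp x - 1) * log x)) (𝓝[>] 0) _ :=
    (((Continuous.tendsto (by fun_prop) 0).mono_left nhdsWithin_le_nhds).neg.add
      tendsto_mul_log_sq_nhdsGT_zero).sub
      ((hv.add_const 1).mul (tendsto_mul_log_nhdsGT_zero_of_isBigO hpO))
  have hw : Tendsto (fun x => (2 * (x * u a x))⁻¹) (𝓝[>] 0) _ :=
    (hv.const_mul 2).inv₀ (by norm_num)
  refine ((hw.isBigO_one ℝ).mul (((boundedAtFilter_u_sub_inv_sub_log a).mul
    (hA.isBigO_one ℝ)).add (hB.isBigO_one ℝ))).congr' ?_ (Eventually.of_forall fun _ => by simp)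
  filter_upwards [eventually_mem_nhdsWithin, hv.eventually_ne one_ne_zero] with x (hx : 0 < x) hxu
  have hu : u a x ≠ 0 := right_ne_zero_of_mul hxu
  simp only [fTau, rga, Pi.mul_apply, Pi.add_apply]
  field_simp
  ring

end

/-- For every real `a`, the transformed conformal-geodesic initial datum satisfies
`f_τ|_{scri⁻} = −(1/2)(x/r_a − r_a/x)(1+x)e^x − (r_a/2)e^{3x} = −x log x + O(x)`. -/
theorem stmt_10 (a : ℝ) :
    ∃ δ > (0:ℝ), ∃ C : ℝ, ∀ x ∈ Set.Ioo (0:ℝ) δ,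
      |(-(1/2) * (x / rga a x - rga a x / x) * (1 + x) * Real.exp x
          - (rga a x / 2) * Real.exp (3*x) + x * Real.log x) / x| ≤ C :=
  (boundedAtFilter_fTau_add_mul_log_div a).exists_abs_le_on_Ioo
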